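/- Let G be a finite Abelian group and q a probability distribution on G with q(g) > 0 for all g ∈ G. For every ε > 0 there exists δ > 0 such that: if A and N are independent G-valued random variables with N distributed according to q, and H(A) ≤ log|G| − ε, then H(A + N) ≥ H(A) + δ. -/

import Mathlib

/-!
Write `p` for the law of `A`. The law of `A + N` is the convolution `q * p`, a `q`-average of the
translates of `p`, so concavity of `t ↦ -t log t` gives `H(q * p) ≥ H(p)`, strictly unless all
translates of `p` agree, i.e. unless `p` is uniform. The laws with `H(p) ≤ log |G| - ε` form a
compact set of non-uniform laws, on which the continuous gain `H(q * p) - H(p)` is positive and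
hence bounded below by some `δ > 0`.
-/

open MeasureTheory

/-- Shannon entropy of a random variable taking values in a finite set. -/
noncomputable def rvEntropy {Ω : Type*} [MeasurableSpace Ω] (μ : Measure Ω)
    {S : Type*} [Fintype S] (A : Ω → S) : ℝ :=
  ∑ a : S, Real.negMulLog ((μ (A ⁻¹' {a})).toReal)

open ProbabilityTheory Real

section Entropy

variable {α : Type*} [Fintype α]

noncomputable def entropy (p : α → ℝ) : ℝ := ∑ a, negMulLog (p a)

theorem continuous_entropy : Continuous (entropy (α := α)) :=
  continuous_finsetSum _ fun a _ => continuous_negMulLog.comp (continuous_apply a)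

theorem entropy_eq_log_card_of_forall_eq {p : α → ℝ} (hp : p ∈ stdSimplex ℝ α)
    (hconst : ∀ x y, p x = p y) : entropy p = log (Fintype.card α) := by
  obtain ⟨x⟩ : Nonempty α := by
    by_contra h
    simpa [not_nonempty_iff.mp h] using hp.2
  have hpx : p x = (Fintype.card α : ℝ)⁻¹ := by
    have hsum := hp.2
    simp only [fun y => hconst y x, Finset.sum_const, Finset.card_univ, nsmul_eq_mul] at hsum
    exact eq_inv_of_mul_eq_one_right hsum
  simp only [entropy, fun y => hconst y x, hpx, Finset.sum_const, Finset.card_univ, nsmul_eq_mul,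
    negMulLog, log_inv]
  have hcard : (0 : ℝ) < Fintype.card α := by exact_mod_cast Fintype.card_pos_iff.mpr ⟨x⟩
  field_simp

theorem exists_ne_of_entropy_lt_log_card {p : α → ℝ} (hp : p ∈ stdSimplex ℝ α)
    (hlt : entropy p < log (Fintype.card α)) : ∃ x y, p x ≠ p y := by
  by_contra! hconst
  exact hlt.ne (entropy_eq_log_card_of_forall_eq hp hconst)

end Entropy

section AddConv

variable {G : Type*} [Fintype G] [AddGroup G]

noncomputable def addConv (q p : G → ℝ) (a : G) : ℝ := ∑ g, q g * p (a - g)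

theorem continuous_addConv (q : G → ℝ) : Continuous (addConv q) :=
  continuous_pi fun a =>
    continuous_finsetSum _ fun g _ => continuous_const.mul (continuous_apply (a - g))

theorem entropy_comp_sub_right (p : G → ℝ) (g : G) : entropy (fun a => p (a - g)) = entropy p :=
  Fintype.sum_equiv (Equiv.subRight g) _ _ fun _ => rfl

variable {q : G → ℝ}

theorem sum_sum_mul_negMulLog_sub (hq1 : ∑ g, q g = 1) (p : G → ℝ) :
    ∑ a, ∑ g, q g * negMulLog (p (a - g)) = entropy p :=
  calc ∑ a, ∑ g, q g * negMulLog (p (a - g))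
      = ∑ g, q g * entropy (fun a => p (a - g)) := by
        rw [Finset.sum_comm]
        simp only [entropy, Finset.mul_sum]
    _ = entropy p := by simp only [entropy_comp_sub_right, ← Finset.sum_mul, hq1, one_mul]

theorem sum_mul_negMulLog_sub_le (hq0 : ∀ g, 0 ≤ q g) (hq1 : ∑ g, q g = 1) {p : G → ℝ}
    (hp0 : ∀ a, 0 ≤ p a) (a : G) :
    ∑ g, q g * negMulLog (p (a - g)) ≤ negMulLog (addConv q p a) := by
  simpa [smul_eq_mul, addConv] using concaveOn_negMulLog.le_map_sum (t := Finset.univ)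
    (p := fun g => p (a - g)) (fun g _ => hq0 g) hq1 fun g _ => hp0 (a - g)

theorem sum_mul_negMulLog_sub_lt (hq0 : ∀ g, 0 < q g) (hq1 : ∑ g, q g = 1) {p : G → ℝ}
    (hp0 : ∀ a, 0 ≤ p a) {x y : G} (hxy : p x ≠ p y) :
    ∑ g, q g * negMulLog (p (x - g)) < negMulLog (addConv q p x) := by
  simpa [smul_eq_mul, addConv] using strictConcaveOn_negMulLog.lt_map_sum (t := Finset.univ)
    (p := fun g => p (x - g)) (fun g _ => hq0 g) hq1 (fun g _ => hp0 (x - g))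
    ⟨0, Finset.mem_univ _, -y + x, Finset.mem_univ _, by simpa [sub_eq_add_neg] using hxy⟩

theorem entropy_lt_entropy_addConv (hq0 : ∀ g, 0 < q g) (hq1 : ∑ g, q g = 1) {p : G → ℝ}
    (hp0 : ∀ a, 0 ≤ p a) {x y : G} (hxy : p x ≠ p y) : entropy p < entropy (addConv q p) := by
  rw [← sum_sum_mul_negMulLog_sub hq1 p]
  exact Finset.sum_lt_sum (fun a _ => sum_mul_negMulLog_sub_le (fun g => (hq0 g).le) hq1 hp0 a)
    ⟨x, Finset.mem_univ _, sum_mul_negMulLog_sub_lt hq0 hq1 hp0 hxy⟩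

theorem exists_pos_forall_entropy_add_le_entropy_addConv (hq0 : ∀ g, 0 < q g)
    (hq1 : ∑ g, q g = 1) {ε : ℝ} (hε : 0 < ε) :
    ∃ δ > (0 : ℝ), ∀ p ∈ stdSimplex ℝ G, entropy p ≤ log (Fintype.card G) - ε →
      entropy p + δ ≤ entropy (addConv q p) := by
  set K := stdSimplex ℝ G ∩ {p | entropy p ≤ log (Fintype.card G) - ε}
  have hK : IsCompact K := (isCompact_stdSimplex ℝ G).inter_right
    (isClosed_le continuous_entropy continuous_const)
  have hgain : ∀ p ∈ K, 0 < entropy (addConv q p) - entropy p := by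
    rintro p ⟨hp, hpε : entropy p ≤ _⟩
    obtain ⟨x, y, hxy⟩ := exists_ne_of_entropy_lt_log_card hp (by linarith)
    exact sub_pos.mpr (entropy_lt_entropy_addConv hq0 hq1 hp.1 hxy)
  obtain ⟨δ, hδ, hδle⟩ :=
    hK.exists_forall_le' (f := fun p => entropy (addConv q p) - entropy p)
    ((continuous_entropy.comp (continuous_addConv q)).sub continuous_entropy).continuousOn hgain
  exact ⟨δ, hδ, fun p hp hpε => by linarith [hδle p ⟨hp, hpε⟩]⟩

end AddConv

section Law

variable {Ω G : Type*} [MeasurableSpace Ω] {μ : Measure Ω} [Fintype G] [MeasurableSpace G]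
  [MeasurableSingletonClass G] {A N : Ω → G}

theorem law_mem_stdSimplex [IsProbabilityMeasure μ] (hA : Measurable A) :
    (fun a => (μ (A ⁻¹' {a})).toReal) ∈ stdSimplex ℝ G := by
  refine ⟨fun a => ENNReal.toReal_nonneg, ?_⟩
  rw [← ENNReal.toReal_sum fun a _ => measure_ne_top μ _,
    sum_measure_preimage_singleton _ fun a _ => hA (measurableSet_singleton a)]
  simp

variable [AddGroup G]

theorem measure_add_preimage_singleton (hA : Measurable A) (hN : Measurable N)
    (hAN : IndepFun A N μ) (a : G) :
    μ ((fun ω => A ω + N ω) ⁻¹' {a}) = ∑ g, μ (N ⁻¹' {g}) * μ (A ⁻¹' {a - g}) := by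
  have hfibers : (fun ω => A ω + N ω) ⁻¹' {a} = ⋃ g, N ⁻¹' {g} ∩ A ⁻¹' {a - g} := by
    ext ω
    simp [eq_sub_iff_add_eq]
  have hdisj : Pairwise (Function.onFun Disjoint fun g => N ⁻¹' {g} ∩ A ⁻¹' {a - g}) :=
    fun g h hgh => Set.disjoint_left.mpr fun ω hg hh => hgh (hg.1.symm.trans hh.1)
  rw [hfibers, measure_iUnion hdisj fun g =>
    (hN (measurableSet_singleton g)).inter (hA (measurableSet_singleton _)), tsum_fintype]
  exact Finset.sum_congr rfl fun g _ => hAN.symm.measure_inter_preimage_eq_mul _ _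
    (measurableSet_singleton g) (measurableSet_singleton _)

theorem rvEntropy_add_eq_entropy_addConv [IsFiniteMeasure μ] (hA : Measurable A)
    (hN : Measurable N) (hAN : IndepFun A N μ) :
    rvEntropy μ (fun ω => A ω + N ω) = entropy
      (addConv (fun g => (μ (N ⁻¹' {g})).toReal) fun a => (μ (A ⁻¹' {a})).toReal) := by
  refine Finset.sum_congr rfl fun a _ => ?_
  rw [measure_add_preimage_singleton hA hN hAN,
    ENNReal.toReal_sum fun g _ => ENNReal.mul_ne_top (measure_ne_top μ _) (measure_ne_top μ _)]
  simp only [ENNReal.toReal_mul, addConv]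

end Law

/-- Let `G` be a finite Abelian group and `q` a fully supported probability
distribution on `G`.  For every `ε > 0` there is a `δ > 0` such that: whenever
`A` and `N` are independent `G`-valued random variables with `N` distributed
according to `q`, and `H(A) ≤ log |G| − ε`, then `H(A + N) ≥ H(A) + δ`. -/
theorem entropy_add_gain {G : Type*} [Fintype G] [AddCommGroup G]
    [MeasurableSpace G] [MeasurableSingletonClass G]
    (q : G → ℝ) (hq0 : ∀ g, 0 < q g) (hq1 : ∑ g, q g = 1)
    {ε : ℝ} (hε : 0 < ε) :
    ∃ δ > (0 : ℝ),
      ∀ (Ω : Type) (mΩ : MeasurableSpace Ω) (μ : Measure Ω),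
        IsProbabilityMeasure μ →
        ∀ A N : Ω → G, Measurable A → Measurable N →
          ProbabilityTheory.IndepFun A N μ →
          (∀ g, (μ (N ⁻¹' {g})).toReal = q g) →
          rvEntropy μ A ≤ Real.log (Fintype.card G) - ε →
          rvEntropy μ A + δ ≤ rvEntropy μ (fun ω => A ω + N ω) := by
  obtain ⟨δ, hδ, hgain⟩ := exists_pos_forall_entropy_add_le_entropy_addConv hq0 hq1 hε
  refine ⟨δ, hδ, fun Ω _ μ _ A N hA hN hAN hNq hAε => ?_⟩
  have hlaw : (fun g => (μ (N ⁻¹' {g})).toReal) = q := funext hNq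
  rw [rvEntropy_add_eq_entropy_addConv hA hN hAN, hlaw]
  exact hgain _ (law_mem_stdSimplex hA) hAε
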